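/- arXiv:math/0003170 — 2 statements merged into one kernel-verified Lean document; each statement's English description precedes it below -/
import Mathlib

section
/- For all integers b, q ≥ 0, the alternating sum ∑_{p=0}^{b} (-1)^p · C(p+q, p) · C(b+q+1, p+q+1) equals 1, where C(n,k) denotes the binomial coefficient. -/
/-! Induction on `b`. Pascal's rule splits `C(b+q+2, p+q+1)` into `C(b+q+1, p+q) + C(b+q+1, p+q+1)`.
The second part gives the sum for `b` (its new top term vanishes). By trinomial revision,
`C(p+q, p) · C(n+q, p+q) = C(n+q, q) · C(n, p)`, so the first part is `C(b+q+1, q)` times the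
alternating sum of the row `b + 1` of Pascal's triangle, which is `0`. -/

theorem Nat.add_choose_mul_add_choose_add (n p q : ℕ) :
    (p + q).choose p * (n + q).choose (p + q) = (n + q).choose q * n.choose p := by
  rw [Nat.choose_symm_add, mul_comm, Nat.choose_mul (Nat.le_add_left q p)]
  simp

theorem Int.alternating_sum_add_choose_mul_add_choose_add {n : ℕ} (q : ℕ) (hn : n ≠ 0) :
    ∑ p ∈ Finset.range (n + 1),
      (-1 : ℤ) ^ p * ((p + q).choose p : ℤ) * ((n + q).choose (p + q) : ℤ) = 0 := by
  calc _ = ∑ p ∈ Finset.range (n + 1), ((n + q).choose q : ℤ) * ((-1) ^ p * (n.choose p : ℤ)) := by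
        refine Finset.sum_congr rfl fun p _ => ?_
        rw [mul_assoc, ← Nat.cast_mul, Nat.add_choose_mul_add_choose_add]
        push_cast
        ring
    _ = 0 := by rw [← Finset.mul_sum, Int.alternating_sum_range_choose_of_ne hn, mul_zero]

/-- "Magic Lemma 8.13": for all integers `b, q ≥ 0`,
`∑_{p=0}^{b} (-1)^p · C(p+q, p) · C(b+q+1, p+q+1) = 1`. -/
theorem magic_lemma_8_13 (b q : ℕ) :
    ∑ p ∈ Finset.range (b + 1),
      (-1 : ℤ) ^ p * ((p + q).choose p : ℤ) * ((b + q + 1).choose (p + q + 1) : ℤ) = 1 := by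
  induction b with
  | zero => simp
  | succ b ih =>
    have pascal (p : ℕ) : (b + 1 + q + 1).choose (p + q + 1) =
        (b + 1 + q).choose (p + q) + (b + q + 1).choose (p + q + 1) := by
      rw [Nat.add_right_comm b 1 q]
      exact Nat.choose_succ_succ' _ _
    have top_vanishes : (b + q + 1).choose (b + 1 + q + 1) = 0 := Nat.choose_eq_zero_of_lt (by omega)
    simp only [pascal, Nat.cast_add, mul_add, Finset.sum_add_distrib,
      Int.alternating_sum_add_choose_mul_add_choose_add q b.succ_ne_zero]
    rw [Finset.sum_range_succ _ (b + 1), top_vanishes, ih]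
    simp
end

section
/- In any ℤ≥0-graded conformal algebra C, the bracket [x,y] := ∑_{j≥0} (-1)^j ∂^{(j+1)}(x_{(j)} y) satisfies the Jacobi identity [x,[y,z]] = [[x,y],z] + [y,[x,z]], so (C, [,]) is a Lie algebra over k. -/
/-- A `ℤ≥0`-graded conformal algebra over a commutative ring `k` (section 0.4 of the
paper): a graded `k`-module `M` with divided-power operators `∂^{(j)}` of degree `j`
and bilinear operations `x_{(n)}y` of degree `-n-1` for `n ≥ 0`, satisfying the axioms
(0.4.1)–(0.4.4).  Infinite sums are expressed with `finsum` (`∑ᶠ`); they are locally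
finite since the operations have negative degree. -/
structure GradedConformalAlgebra (k : Type*) (M : Type*) [CommRing k]
    [AddCommGroup M] [Module k M] where
  /-- the grading `M = ⊕_{i ≥ 0} M_i` -/
  grading : ℕ → Submodule k M
  isInternal : DirectSum.IsInternal grading
  /-- the divided powers `∂^{(j)}` -/
  D : ℕ → M →ₗ[k] M
  /-- the operations `x_{(n)} y`, `n ≥ 0` -/
  nop : ℕ → M →ₗ[k] M →ₗ[k] M
  D_zero : D 0 = LinearMap.id
  /-- (0.4.1): `∂^{(i)} ∂^{(j)} = C(i+j,i) ∂^{(i+j)}` -/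
  D_comp : ∀ i j : ℕ, (D i).comp (D j) = (((i + j).choose i : ℤ)) • D (i + j)
  /-- `∂^{(j)}` has degree `j` -/
  D_deg : ∀ (i j : ℕ) (x : M), x ∈ grading i → D j x ∈ grading (i + j)
  /-- `_{(n)}` has degree `-n-1` -/
  nop_deg : ∀ (i j n : ℕ) (x y : M), x ∈ grading i → y ∈ grading j →
    nop n x y ∈ grading (i + j - n - 1) ∧ (i + j < n + 1 → nop n x y = 0)
  /-- (0.4.2): `(∂^{(i)}x)_{(n)}y = (-1)^i C(n,i) x_{(n-i)}y` (the right-hand side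
  being zero when `i > n`, since then `C(n,i) = 0`). -/
  D_nop : ∀ (i n : ℕ) (x y : M),
    nop n (D i x) y = ((-1 : ℤ) ^ i * (n.choose i : ℤ)) • nop (n - i) x y
  /-- (0.4.3): quasi-symmetry `x_{(n)}y = (-1)^{n+1} ∑_{j≥0} (-1)^j ∂^{(j)}(y_{(n+j)}x)` -/
  quasi_symm : ∀ (n : ℕ) (x y : M),
    nop n x y = (-1 : ℤ) ^ (n + 1) • ∑ᶠ j : ℕ, ((-1 : ℤ) ^ j) • D j (nop (n + j) y x)
  /-- (0.4.4): `x_{(m)}y_{(n)}z = y_{(n)}x_{(m)}z + ∑_{j=0}^m C(m,j)(x_{(j)}y)_{(m+n-j)}z` -/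
  comm_formula : ∀ (m n : ℕ) (x y z : M),
    nop m x (nop n y z) = nop n y (nop m x z)
      + ∑ j ∈ Finset.range (m + 1), ((m.choose j : ℤ)) • nop (m + n - j) (nop j x y) z

/-- The bracket `[x,y] := ∑_{j≥0} (-1)^j ∂^{(j+1)}(x_{(j)} y)` of (8.21.1). -/
noncomputable def GradedConformalAlgebra.bracket {k M : Type*} [CommRing k] [AddCommGroup M]
    [Module k M] (C : GradedConformalAlgebra k M) (x y : M) : M :=
  ∑ᶠ j : ℕ, ((-1 : ℤ) ^ j) • C.D (j + 1) (C.nop j x y)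

/-!
All sums are finite because the operations `_{(n)}` lower the degree. Put
`T(x,y,z) = ∑_{m,n} (-1)^{m+n} ∂^{(m+n+2)}(x_{(m)}y_{(n)}z)`.

Applying quasi-symmetry twice turns left sesquilinearity into right sesquilinearity,
`x_{(n)}∂^{(j)}y = ∑_i C(n,i) ∂^{(j-i)}(x_{(n-i)}y)` (the coefficients are iterated forward
differences of `s ↦ C(n+s,j)`). From it, `[x, ∂^{(j)}w] = ∑_m (-1)^m ∂^{(m+j+1)}(x_{(m)}w)`, the
binomial sum that appears being Chu–Vandermonde with upper index `-(m+1)`; hence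
`[x,[y,z]] = T(x,y,z)`.

Left sesquilinearity gives `[∂^{(j)}w, z] = ∑_r (-1)^r C(r+j,j) ∂^{(r+j+1)}(w_{(r)}z)`, so
`[[x,y],z] = ∑_{q,r} (-1)^{q+r} C(q+r+1,q+1) ∂^{(q+r+2)}((x_{(q)}y)_{(r)}z)`. Splitting
`C(q+r+1,q+1)` by the hockey-stick identity and regrouping produces exactly the sums
`∑_j C(m,j) (x_{(j)}y)_{(m+n-j)}z` of the commutator formula, so `[[x,y],z] = T(x,y,z) - T(y,x,z)`,
and `T(y,x,z) = [y,[x,z]]`.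
-/

open Finset Filter

section Binomial

theorem fwdDiff_iter_choose_eq_ite (j u : ℕ) :
    (fwdDiff 1)^[u] (fun x ↦ x.choose j : ℕ → ℤ)
      = fun x ↦ if u ≤ j then (x.choose (j - u) : ℤ) else 0 := by
  by_cases h : u ≤ j
  · obtain ⟨i, rfl⟩ := Nat.exists_eq_add_of_le h
    simpa [h] using fwdDiff_iter_choose i u
  · obtain ⟨d, rfl⟩ := Nat.exists_eq_add_of_lt (not_le.1 h)
    have hj := fwdDiff_iter_choose 0 j
    simp only [add_zero, Nat.choose_zero_right, Nat.cast_one] at hj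
    rw [show j + d + 1 = d + 1 + j by omega, Function.iterate_add_apply, hj,
      Function.iterate_succ_apply, fwdDiff_const]
    ext x
    simp [fwdDiff_iter_eq_sum_shift]

theorem sum_range_neg_one_pow_mul_choose_mul_add_choose (u n j : ℕ) :
    ∑ s ∈ range (u + 1), (-1 : ℤ) ^ (u - s) * u.choose s * (n + s).choose j
      = if u ≤ j then (n.choose (j - u) : ℤ) else 0 := by
  have h := congrFun (fwdDiff_iter_choose_eq_ite j u) n
  rw [fwdDiff_iter_eq_sum_shift] at h
  simpa using h

theorem sum_antidiagonal_neg_one_pow_mul_add_choose_mul_choose {a m : ℕ} (h : a < m) (c : ℕ) :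
    ∑ p ∈ antidiagonal c, (-1 : ℤ) ^ p.1 * (a + p.1).choose a * m.choose p.2
      = (m - a - 1).choose c := by
  have hneg (p : ℕ) : Ring.choose (-((a + 1 : ℕ) : ℤ)) p = (-1) ^ p * (a + p).choose a := by
    rw [Ring.choose_neg, Int.negOnePow_def, Units.smul_def,
      show ((a + 1 : ℕ) : ℤ) + p - 1 = ((a + p : ℕ) : ℤ) by push_cast; ring,
      Ring.choose_natCast, Nat.choose_symm_add]
    simp
  have hsum : -((a + 1 : ℕ) : ℤ) + m = ((m - a - 1 : ℕ) : ℤ) := by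
    push_cast [Nat.sub_sub]
    omega
  have hvandermonde := Ring.add_choose_eq c (Commute.all (-((a + 1 : ℕ) : ℤ)) m)
  rw [hsum, Ring.choose_natCast] at hvandermonde
  rw [hvandermonde]
  exact sum_congr rfl fun p _ => by rw [hneg, Ring.choose_natCast]

end Binomial

section Reindexing

variable {M : Type*} [AddCommMonoid M]

theorem finsum_eq_sum_range {f : ℕ → M} {N : ℕ} (h : ∀ n, N ≤ n → f n = 0) :
    ∑ᶠ n, f n = ∑ n ∈ range N, f n :=
  finsum_eq_sum_of_support_subset f fun n hn => mem_range.2 (not_le.1 fun h' => hn (h n h'))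

theorem sum_range_eq_sum_range_add {f : ℕ → M} {p N R : ℕ} (hlow : ∀ i < p, f i = 0)
    (hhigh : ∀ i, p + N ≤ i → f i = 0) (hR : p + N ≤ R) :
    ∑ i ∈ range R, f i = ∑ m ∈ range N, f (p + m) := by
  rw [eventually_constant_sum hhigh hR, sum_range_add,
    sum_eq_zero fun i hi => hlow i (mem_range.1 hi), zero_add]

theorem sum_range_sum_range_eq_sum_range_sum_range_succ {g : ℕ → ℕ → M} {R : ℕ}
    (h : ∀ s t, R ≤ s + t → g s t = 0) :
    ∑ s ∈ range R, ∑ t ∈ range R, g s t = ∑ u ∈ range R, ∑ s ∈ range (u + 1), g s (u - s) := by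
  rw [sum_range_diag_flip]
  exact sum_congr rfl fun s hs =>
    eventually_constant_sum (fun t ht => h s t (by have := mem_range.1 hs; omega)) (Nat.sub_le R s)

theorem sum_range_sum_range_sum_choose_smul {F : ℕ → ℕ → M} {N : ℕ}
    (hF : ∀ q r, N ≤ q + r → F q r = 0) :
    ∑ m ∈ range N, ∑ n ∈ range N, ∑ q ∈ range (m + 1), m.choose q • F q (m + n - q)
      = ∑ q ∈ range N, ∑ r ∈ range N, (q + r + 1).choose (q + 1) • F q r := by
  have hockey (q r : ℕ) : (q + r + 1).choose (q + 1) = ∑ d ∈ range (r + 1), (q + d).choose q := by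
    rw [add_comm q r, ← Nat.sum_range_add_choose]
    simp only [add_comm]
  simp only [hockey, sum_smul]
  rw [← sum_product', ← sum_product', sum_sigma', sum_sigma']
  -- `(m, n, q) ↦ (q, r, d) = (q, m + n - q, m - q)`, inverse `(q, r, d) ↦ (q + d, r - d, q)`
  refine sum_bij_ne_zero (fun x _ _ => ⟨(x.2, x.1.1 + x.1.2 - x.2), x.1.1 - x.2⟩) ?_ ?_ ?_ ?_
  · rintro ⟨⟨m, n⟩, q⟩ hx hne
    dsimp only at hne ⊢
    have : q + (m + n - q) < N := not_le.1 fun h => hne (by rw [hF q _ h, smul_zero])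
    simp only [mem_sigma, mem_product, mem_range] at hx ⊢
    omega
  · rintro ⟨⟨m, n⟩, q⟩ hx - ⟨⟨m', n'⟩, q'⟩ hx' - h
    simp only [mem_sigma, mem_product, mem_range, Sigma.mk.injEq, Prod.mk.injEq,
      heq_eq_eq] at hx hx' h ⊢
    omega
  · rintro ⟨⟨q, r⟩, d⟩ hx hne
    dsimp only at hne
    have : q + r < N := not_le.1 fun h => hne (by rw [hF q r h, smul_zero])
    simp only [mem_sigma, mem_product, mem_range] at hx
    have hr : q + d + (r - d) - q = r := by omega
    refine ⟨⟨⟨q + d, r - d⟩, q⟩, ?_, ?_, ?_⟩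
    · simp only [mem_sigma, mem_product, mem_range]
      omega
    · dsimp only
      rwa [hr]
    · simp only [Sigma.mk.injEq, Prod.mk.injEq, heq_eq_eq, true_and]
      omega
  · rintro ⟨⟨m, n⟩, q⟩ hx -
    simp only [mem_sigma, mem_product, mem_range] at hx
    dsimp only
    rw [add_tsub_cancel_of_le (by omega : q ≤ m)]

end Reindexing

theorem Filter.eventually_atTop_forall_apply_eq_zero {M : Type*} [Zero M] {Φ : ℕ → M → M}
    (hΦ : ∀ m, Φ m 0 = 0) {v : ℕ → M} (hv : ∀ᶠ n in atTop, v n = 0)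
    (h : ∀ n, ∀ᶠ m in atTop, Φ m (v n) = 0) : ∀ᶠ m in atTop, ∀ n, Φ m (v n) = 0 := by
  obtain ⟨N, hN⟩ := eventually_atTop.1 hv
  filter_upwards [(eventually_all_finset (range N)).2 fun n _ => h n] with m hm n
  by_cases hn : n < N
  · exact hm n (mem_range.2 hn)
  · rw [hN n (not_lt.1 hn), hΦ]

namespace GradedConformalAlgebra

variable {k M : Type*} [CommRing k] [AddCommGroup M] [Module k M] (C : GradedConformalAlgebra k M)

theorem D_comp_apply (i j : ℕ) (v : M) :
    C.D i (C.D j v) = ((i + j).choose i : ℤ) • C.D (i + j) v := by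
  simpa using LinearMap.congr_fun (C.D_comp i j) v

theorem eventually_nop_eq_zero (x y : M) : ∀ᶠ n in atTop, C.nop n x y = 0 := by
  have hmem (v : M) : v ∈ ⨆ i, C.grading i := by
    rw [C.isInternal.submodule_iSup_eq_top]
    trivial
  refine Submodule.iSup_induction (motive := fun x => ∀ᶠ n in atTop, C.nop n x y = 0) _ (hmem x)
    (fun i x hx => ?_) (by simp) fun x₁ x₂ h₁ h₂ => ?_
  · refine Submodule.iSup_induction (motive := fun y => ∀ᶠ n in atTop, C.nop n x y = 0) _
      (hmem y) (fun j y hy => ?_) (by simp) fun y₁ y₂ h₁ h₂ => ?_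
    · exact eventually_atTop.2 ⟨i + j + 1, fun n hn => (C.nop_deg i j n x y hx hy).2 (by omega)⟩
    · filter_upwards [h₁, h₂] with n h₁ h₂
      rw [map_add, h₁, h₂, add_zero]
  · filter_upwards [h₁, h₂] with n h₁ h₂
    rw [map_add, LinearMap.add_apply, h₁, h₂, add_zero]

theorem eventually_forall_nop_nop_eq_zero (x y z : M) :
    ∀ᶠ m in atTop, ∀ n, C.nop m x (C.nop n y z) = 0 :=
  eventually_atTop_forall_apply_eq_zero (fun _ => map_zero _) (C.eventually_nop_eq_zero y z)
    fun _ => C.eventually_nop_eq_zero x _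

theorem eventually_forall_nop_nop_left_eq_zero (x y z : M) :
    ∀ᶠ r in atTop, ∀ q, C.nop r (C.nop q x y) z = 0 :=
  eventually_atTop_forall_apply_eq_zero (Φ := fun r w => C.nop r w z) (fun _ => by simp)
    (C.eventually_nop_eq_zero x y) fun _ => C.eventually_nop_eq_zero _ z

theorem bracket_eq_sum_range {x y : M} {N : ℕ} (h : ∀ n, N ≤ n → C.nop n x y = 0) :
    C.bracket x y = ∑ j ∈ range N, (-1 : ℤ) ^ j • C.D (j + 1) (C.nop j x y) :=
  finsum_eq_sum_range fun n hn => by rw [h n hn, map_zero, smul_zero]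

theorem bracket_add_left (x₁ x₂ y : M) :
    C.bracket (x₁ + x₂) y = C.bracket x₁ y + C.bracket x₂ y := by
  obtain ⟨N, hN⟩ := eventually_atTop.1
    ((C.eventually_nop_eq_zero x₁ y).and (C.eventually_nop_eq_zero x₂ y))
  rw [C.bracket_eq_sum_range fun n hn => (hN n hn).1,
    C.bracket_eq_sum_range fun n hn => (hN n hn).2,
    C.bracket_eq_sum_range (N := N) fun n hn => by simp [(hN n hn).1, (hN n hn).2],
    ← sum_add_distrib]
  simp only [map_add, LinearMap.add_apply, smul_add]

theorem bracket_add_right (x y₁ y₂ : M) :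
    C.bracket x (y₁ + y₂) = C.bracket x y₁ + C.bracket x y₂ := by
  obtain ⟨N, hN⟩ := eventually_atTop.1
    ((C.eventually_nop_eq_zero x y₁).and (C.eventually_nop_eq_zero x y₂))
  rw [C.bracket_eq_sum_range fun n hn => (hN n hn).1,
    C.bracket_eq_sum_range fun n hn => (hN n hn).2,
    C.bracket_eq_sum_range (N := N) fun n hn => by simp [(hN n hn).1, (hN n hn).2],
    ← sum_add_distrib]
  simp only [map_add, smul_add]

theorem bracket_sum_zsmul_left {ι : Type*} (s : Finset ι) (c : ι → ℤ) (v : ι → M) (y : M) :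
    C.bracket (∑ i ∈ s, c i • v i) y = ∑ i ∈ s, c i • C.bracket (v i) y := by
  let f : M →+ M := AddMonoidHom.mk' (C.bracket · y) fun a b => C.bracket_add_left a b y
  exact (map_sum f _ s).trans (sum_congr rfl fun i _ => map_zsmul f (c i) (v i))

theorem bracket_sum_zsmul_right {ι : Type*} (x : M) (s : Finset ι) (c : ι → ℤ) (v : ι → M) :
    C.bracket x (∑ i ∈ s, c i • v i) = ∑ i ∈ s, c i • C.bracket x (v i) := by
  let f : M →+ M := AddMonoidHom.mk' (C.bracket x) (C.bracket_add_right x)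
  exact (map_sum f _ s).trans (sum_congr rfl fun i _ => map_zsmul f (c i) (v i))

theorem nop_D_eq_sum_range_sum_range {x y : M} {B : ℕ} (hxy : ∀ i, B ≤ i → C.nop i x y = 0)
    (hyx : ∀ i, B ≤ i → C.nop i y x = 0) (n j : ℕ) :
    C.nop n x (C.D j y) = ∑ s ∈ range (B + j), ∑ t ∈ range (B + j),
      ((-1 : ℤ) ^ t * (n + s).choose j * (s + t).choose s) •
        C.D (s + t) (C.nop (n + s + t - j) x y) := by
  rw [C.quasi_symm n x (C.D j y), finsum_eq_sum_range (N := B + j) fun s hs => by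
    rw [C.D_nop, hyx _ (by omega), smul_zero, map_zero, smul_zero], smul_sum]
  refine sum_congr rfl fun s _ => ?_
  rw [C.D_nop]
  by_cases hs : j ≤ n + s
  · rw [C.quasi_symm (n + s - j) y x, finsum_eq_sum_range (N := B + j) fun t ht => by
      rw [hxy _ (by omega), map_zero, smul_zero]]
    simp only [map_zsmul, map_sum, smul_sum, D_comp_apply, smul_smul]
    refine sum_congr rfl fun t _ => ?_
    rw [show n + s - j + t = n + s + t - j by omega]
    congr 1
    have hsign : (-1 : ℤ) ^ (n + 1) * (-1) ^ s * (-1) ^ j * (-1) ^ (n + s - j + 1) = 1 := by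
      simp only [← pow_add]
      exact Even.neg_one_pow ⟨n + s + 1, by omega⟩
    linear_combination ((-1 : ℤ) ^ t * (n + s).choose j * (s + t).choose s) * hsign
  · simp [Nat.choose_eq_zero_of_lt (not_le.1 hs)]

theorem nop_D_right (n j : ℕ) (x y : M) :
    C.nop n x (C.D j y)
      = ∑ i ∈ range (j + 1), (n.choose i : ℤ) • C.D (j - i) (C.nop (n - i) x y) := by
  obtain ⟨B, hB⟩ := eventually_atTop.1
    ((C.eventually_nop_eq_zero x y).and (C.eventually_nop_eq_zero y x))
  rw [C.nop_D_eq_sum_range_sum_range (B := B + 1) (fun i hi => (hB i (by omega)).1)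
      (fun i hi => (hB i (by omega)).2),
    sum_range_sum_range_eq_sum_range_sum_range_succ fun s t hst => ?vanish]
  case vanish =>
    rcases lt_or_ge (n + s) j with h | h
    · simp [Nat.choose_eq_zero_of_lt h]
    · rw [(hB _ (by omega)).1, map_zero, smul_zero]
  have hcoeff (u : ℕ) : ∑ s ∈ range (u + 1), ((-1 : ℤ) ^ (u - s) * (n + s).choose j *
      (s + (u - s)).choose s) • C.D (s + (u - s)) (C.nop (n + s + (u - s) - j) x y)
      = (if u ≤ j then (n.choose (j - u) : ℤ) else 0) • C.D u (C.nop (n + u - j) x y) := by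
    rw [← sum_range_neg_one_pow_mul_choose_mul_add_choose, sum_smul]
    refine sum_congr rfl fun s hs => ?_
    have hu : s + (u - s) = u := by have := mem_range.1 hs; omega
    rw [hu, add_assoc, hu]
    ring_nf
  simp only [hcoeff]
  rw [eventually_constant_sum (N := j + 1) (fun u hu => by simp [show ¬u ≤ j by omega])
    (by omega), ← sum_range_reflect]
  refine sum_congr rfl fun i hi => ?_
  have := mem_range.1 hi
  rw [if_pos (by omega), show j + 1 - 1 - i = j - i by omega, show j - (j - i) = i by omega,
    show n + (j - i) - j = n - i by omega]

theorem bracket_D_right {x w : M} {N : ℕ} (h : ∀ m, N ≤ m → C.nop m x w = 0) (j : ℕ) :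
    C.bracket x (C.D j w) = ∑ m ∈ range N, (-1 : ℤ) ^ m • C.D (m + j + 1) (C.nop m x w) := by
  have hcoeff (m : ℕ) : ∑ p ∈ range (j + 1),
      (-1 : ℤ) ^ p * ((p + m).choose p * (m + j + 1).choose (p + m + 1)) = 1 := by
    have h := sum_antidiagonal_neg_one_pow_mul_add_choose_mul_choose (by omega : m < m + j + 1) j
    rw [Nat.sum_antidiagonal_eq_sum_range_succ (fun a b => (-1 : ℤ) ^ a * (m + a).choose m *
      (m + j + 1).choose b), show m + j + 1 - m - 1 = j by omega, Nat.choose_self,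
      Nat.cast_one] at h
    refine Eq.trans (sum_congr rfl fun p hp => ?_) h
    have := mem_range.1 hp
    rw [Nat.choose_symm_add, add_comm p m, ← Nat.choose_symm (by omega : m + p + 1 ≤ m + j + 1),
      show m + j + 1 - (m + p + 1) = j - p by omega, mul_assoc]
  rw [C.bracket_eq_sum_range (N := N + j) fun i hi => by
    rw [nop_D_right]
    exact sum_eq_zero fun p hp => by
      rw [h _ (by have := mem_range.1 hp; omega), map_zero, smul_zero]]
  simp only [nop_D_right, map_sum, map_zsmul, D_comp_apply, smul_sum, smul_smul]
  calc _ = ∑ p ∈ range (j + 1), ∑ m ∈ range N, ((-1 : ℤ) ^ m * ((-1) ^ p *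
        ((p + m).choose p * (m + j + 1).choose (p + m + 1)))) • C.D (m + j + 1) (C.nop m x w) := by
        rw [sum_comm]
        refine sum_congr rfl fun p hp => ?_
        have := mem_range.1 hp
        rw [sum_range_eq_sum_range_add (p := p) (N := N)
          (fun i hi => by simp [Nat.choose_eq_zero_of_lt hi])
          (fun i hi => by rw [h _ (by omega), map_zero, smul_zero]) (by omega)]
        refine sum_congr rfl fun m _ => ?_
        rw [show p + m + 1 + (j - p) = m + j + 1 by omega, add_tsub_cancel_left, pow_add]
        ring_nf
    _ = _ := by
        rw [sum_comm]
        refine sum_congr rfl fun m _ => ?_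
        rw [← sum_smul, ← mul_sum, hcoeff, mul_one]

theorem bracket_D_left {w z : M} {N : ℕ} (h : ∀ r, N ≤ r → C.nop r w z = 0) (j : ℕ) :
    C.bracket (C.D j w) z
      = ∑ r ∈ range N, ((-1 : ℤ) ^ r * (r + j).choose j) • C.D (r + j + 1) (C.nop r w z) := by
  have hvanish (i : ℕ) (hi : j + N ≤ i) : C.nop i (C.D j w) z = 0 := by
    rw [C.D_nop, h _ (by omega), smul_zero]
  rw [C.bracket_eq_sum_range hvanish, sum_range_eq_sum_range_add (p := j) (N := N)
    (fun i hi => by simp [C.D_nop, Nat.choose_eq_zero_of_lt hi])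
    (fun i hi => by rw [hvanish i hi, map_zero, smul_zero]) le_rfl]
  refine sum_congr rfl fun r _ => ?_
  have hsign : (-1 : ℤ) ^ j * (-1) ^ j = 1 := by rw [← mul_pow]; simp
  rw [C.D_nop, add_tsub_cancel_left, map_zsmul, smul_smul, add_comm j r]
  congr 1
  linear_combination ((-1 : ℤ) ^ r * (r + j).choose j) * hsign

noncomputable def nestedBracketSum (N : ℕ) (x y z : M) : M :=
  ∑ m ∈ range N, ∑ n ∈ range N, (-1 : ℤ) ^ (m + n) • C.D (m + n + 2) (C.nop m x (C.nop n y z))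

theorem bracket_bracket_right {x y z : M} {N : ℕ} (hyz : ∀ n, N ≤ n → C.nop n y z = 0)
    (hxyz : ∀ m, N ≤ m → ∀ n, C.nop m x (C.nop n y z) = 0) :
    C.bracket x (C.bracket y z) = C.nestedBracketSum N x y z := by
  rw [C.bracket_eq_sum_range hyz, C.bracket_sum_zsmul_right, nestedBracketSum, sum_comm]
  refine sum_congr rfl fun n _ => ?_
  rw [C.bracket_D_right (fun m hm => hxyz m hm n), smul_sum]
  refine sum_congr rfl fun m _ => ?_
  rw [smul_smul, ← pow_add, add_comm n m, show m + (n + 1) + 1 = m + n + 2 by ring]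

theorem bracket_bracket_left {x y z : M} {N : ℕ} (hxy : ∀ q, N ≤ q → C.nop q x y = 0)
    (hxyz : ∀ r, N ≤ r → ∀ q, C.nop r (C.nop q x y) z = 0) :
    C.bracket (C.bracket x y) z
      = C.nestedBracketSum (2 * N) x y z - C.nestedBracketSum (2 * N) y x z := by
  set F : ℕ → ℕ → M := fun q r => (-1 : ℤ) ^ (q + r) • C.D (q + r + 2) (C.nop r (C.nop q x y) z)
  have hF (q r : ℕ) (hqr : 2 * N ≤ q + r) : F q r = 0 := by
    rcases le_or_gt N q with hq | hq
    · simp [F, hxy q hq]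
    · simp [F, hxyz r (by omega) q]
  calc C.bracket (C.bracket x y) z
      = ∑ q ∈ range (2 * N), ∑ r ∈ range (2 * N), (q + r + 1).choose (q + 1) • F q r := by
        rw [C.bracket_eq_sum_range (N := 2 * N) fun q hq => hxy q (by omega),
          C.bracket_sum_zsmul_left]
        refine sum_congr rfl fun q _ => ?_
        rw [C.bracket_D_left (N := 2 * N) (fun r hr => hxyz r (by omega) q), smul_sum]
        refine sum_congr rfl fun r _ => ?_
        rw [← natCast_zsmul, smul_smul, smul_smul, show r + (q + 1) = q + r + 1 by ring]
        congr 1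
        ring
    _ = ∑ m ∈ range (2 * N), ∑ n ∈ range (2 * N), ∑ q ∈ range (m + 1),
          m.choose q • F q (m + n - q) := (sum_range_sum_range_sum_choose_smul hF).symm
    _ = ∑ m ∈ range (2 * N), ∑ n ∈ range (2 * N), (-1 : ℤ) ^ (m + n) •
          C.D (m + n + 2) (C.nop m x (C.nop n y z) - C.nop n y (C.nop m x z)) := by
        refine sum_congr rfl fun m _ => sum_congr rfl fun n _ => ?_
        rw [C.comm_formula m n x y z, add_sub_cancel_left, map_sum, smul_sum]
        refine sum_congr rfl fun q hq => ?_
        simp only [F]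
        rw [show q + (m + n - q) = m + n by have := mem_range.1 hq; omega, map_zsmul,
          ← natCast_zsmul, smul_comm]
    _ = _ := by
        simp only [map_sub, smul_sub, sum_sub_distrib, nestedBracketSum]
        rw [sum_comm (s := range (2 * N)) (f := fun m n =>
          (-1 : ℤ) ^ (m + n) • C.D (m + n + 2) (C.nop n y (C.nop m x z)))]
        exact congrArg _ (sum_congr rfl fun m _ => sum_congr rfl fun n _ => by rw [add_comm n m])

end GradedConformalAlgebra

/-- Theorem 8.22: the bracket (8.21.1) satisfies the Jacobi identity
`[x,[y,z]] = [[x,y],z] + [y,[x,z]]`, so `(C, [,])` is a Lie algebra over `k`. -/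
theorem bracket_jacobi {k M : Type*} [CommRing k] [AddCommGroup M] [Module k M]
    (C : GradedConformalAlgebra k M) (x y z : M) :
    C.bracket x (C.bracket y z)
      = C.bracket (C.bracket x y) z + C.bracket y (C.bracket x z) := by
  obtain ⟨N, hN⟩ := eventually_atTop.1 <| (C.eventually_nop_eq_zero y z).and <|
    (C.eventually_nop_eq_zero x z).and <| (C.eventually_nop_eq_zero x y).and <|
    (C.eventually_forall_nop_nop_eq_zero x y z).and <|
    (C.eventually_forall_nop_nop_eq_zero y x z).and <|
    C.eventually_forall_nop_nop_left_eq_zero x y z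
  choose hyz hxz hxy hx_yz hy_xz hxy_z using hN
  have twice {p : ℕ → Prop} (h : ∀ n, N ≤ n → p n) (n : ℕ) (hn : 2 * N ≤ n) : p n :=
    h n (by omega)
  rw [C.bracket_bracket_right (twice hyz) (twice hx_yz),
    C.bracket_bracket_right (twice hxz) (twice hy_xz), C.bracket_bracket_left hxy hxy_z,
    sub_add_cancel]
end
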